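/- arXiv:1911.05991 — 6 statements merged into one kernel-verified Lean document; each statement's English description precedes it below -/
import Mathlib

section
/- Let G be a graph with girth at least 2k+2 for an integer k ≥ 1. Then G is the only subgraph of itself that is a multiplicative (2k−1)-spanner of G; equivalently, removing any edge {u,v} from G increases the distance from u to v to at least 2k+1. -/
/-- For a graph `G` of girth at least `2k+2` (`k ≥ 1`), removing any edge `{u,v}`
increases the distance from `u` to `v` to at least `2k+1`; equivalently, `G` is the
only subgraph of itself that is a multiplicative `(2k-1)`-spanner of `G`. -/
theorem girth_only_mult_spanner {V : Type*} (G : SimpleGraph V) (k : ℕ) (hk : 1 ≤ k)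
    (hg : (2 * k + 2 : ℕ) ≤ G.egirth) :
    (∀ u v, G.Adj u v →
      ((2 * k + 1 : ℕ) : ℕ∞) ≤ (G.deleteEdges {s(u, v)}).edist u v) ∧
    (∀ H : SimpleGraph V, H ≤ G →
      (∀ u v, H.edist u v ≤ ((2 * k - 1 : ℕ) : ℕ∞) * G.edist u v) → H = G) := by
  have main : ∀ u v, G.Adj u v →
      ((2 * k + 1 : ℕ) : ℕ∞) ≤ (G.deleteEdges {s(u, v)}).edist u v := by
    intro u v huv
    classical
    by_contra hlt
    push_neg at hlt
    have hne : (G.deleteEdges {s(u, v)}).edist u v ≠ ⊤ := by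
      intro h; rw [h] at hlt; exact (not_top_lt hlt)
    obtain ⟨p, hp⟩ := SimpleGraph.exists_walk_of_edist_ne_top hne
    -- p is a walk of length < 2k+1 in the deleted graph
    have hplen : (p.length : ℕ∞) < ((2 * k + 1 : ℕ) : ℕ∞) := hp ▸ hlt
    have hplen' : p.length < 2 * k + 1 := by exact_mod_cast hplen
    set q := p.bypass with hq
    have hqpath : q.IsPath := p.bypass_isPath
    have hqlen : q.length ≤ p.length := p.length_bypass_le
    -- transfer q to G
    have hsub : ∀ e ∈ q.edges, e ∈ G.edgeSet := by
      intro e he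
      have := q.edges_subset_edgeSet he
      rw [SimpleGraph.edgeSet_deleteEdges] at this
      exact this.1
    have hnotmem : s(u, v) ∉ q.edges := by
      intro hmem
      have := q.edges_subset_edgeSet hmem
      rw [SimpleGraph.edgeSet_deleteEdges] at this
      exact this.2 rfl
    set r := q.transfer G hsub with hr
    have hrpath : r.IsPath := hqpath.transfer hsub
    have hredges : r.edges = q.edges := q.edges_transfer hsub
    have hrlen : r.length = q.length := q.length_transfer hsub
    -- build a cycle
    have hcyc : (SimpleGraph.Walk.cons huv r.reverse).IsCycle := by
      rw [SimpleGraph.Walk.cons_isCycle_iff]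
      refine ⟨hrpath.reverse, ?_⟩
      rw [SimpleGraph.Walk.edges_reverse, List.mem_reverse, hredges]
      exact hnotmem
    have := SimpleGraph.le_egirth.mp (le_refl G.egirth) u
      (SimpleGraph.Walk.cons huv r.reverse) hcyc
    have hge := le_trans hg this
    have hclen : (SimpleGraph.Walk.cons huv r.reverse).length =
        r.length + 1 := by
      simp [SimpleGraph.Walk.length_cons]
    rw [hclen] at hge
    have : (2 * k + 2 : ℕ) ≤ r.length + 1 := by exact_mod_cast hge
    omega
  refine ⟨main, fun H hHG hspan => ?_⟩
  refine le_antisymm hHG (fun a b hab => ?_)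
  by_contra hH
  have hHle : H ≤ G.deleteEdges {s(a, b)} := by
    intro x y hxy
    rw [SimpleGraph.deleteEdges_adj]
    refine ⟨hHG hxy, ?_⟩
    intro hmem
    rw [Set.mem_singleton_iff, Sym2.eq_iff] at hmem
    rcases hmem with ⟨rfl, rfl⟩ | ⟨rfl, rfl⟩
    · exact hH hxy
    · exact hH hxy.symm
  have h1 : (G.deleteEdges {s(a, b)}).edist a b ≤ H.edist a b :=
    SimpleGraph.edist_anti hHle
  have h2 : H.edist a b ≤ ((2 * k - 1 : ℕ) : ℕ∞) * G.edist a b := hspan a b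
  have h3 : G.edist a b = 1 := SimpleGraph.edist_eq_one_iff_adj.mpr hab
  rw [h3, mul_one] at h2
  have h4 := le_trans (main a b hab) (le_trans h1 h2)
  have : (2 * k + 1 : ℕ) ≤ (2 * k - 1 : ℕ) := by exact_mod_cast h4
  omega
end

section
/- Let G be a graph with girth at least 2k+2, let Z be a subgraph of G, and let O be a function on pairs of vertices satisfying d_Z(v,w) ≤ O(v,w) ≤ (2k−1)·d_Z(v,w) for all v,w. Then for every edge {v,w} of G: {v,w} ∈ Z implies O(v,w) ≤ 2k−1, and {v,w} ∉ Z implies O(v,w) ≥ 2k+1. Hence O uniquely determines Z among subgraphs of G. -/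
private lemma oracle_edge_bounds {V : Type*} (G : SimpleGraph V) (k : ℕ)
    (hk : 1 ≤ k) (hg : (2 * k + 2 : ℕ) ≤ G.egirth)
    (Z : SimpleGraph V) (hZ : Z ≤ G) (O : V → V → ℕ∞)
    (hO : ∀ v w, Z.edist v w ≤ O v w ∧ O v w ≤ ((2 * k - 1 : ℕ) : ℕ∞) * Z.edist v w) :
    ∀ v w, G.Adj v w →
      (Z.Adj v w → O v w ≤ ((2 * k - 1 : ℕ) : ℕ∞)) ∧
      (¬ Z.Adj v w → ((2 * k + 1 : ℕ) : ℕ∞) ≤ O v w) := by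
  classical
  intro v w hvw
  constructor
  · intro hZa
    calc O v w ≤ ((2 * k - 1 : ℕ) : ℕ∞) * Z.edist v w := (hO v w).2
      _ = ((2 * k - 1 : ℕ) : ℕ∞) := by
          rw [SimpleGraph.edist_eq_one_iff_adj.mpr hZa, mul_one]
  · intro hZn
    refine le_trans ?_ (hO v w).1
    by_contra h
    push_neg at h
    have hne : Z.edist v w ≠ ⊤ := ne_top_of_lt h
    obtain ⟨p, hp⟩ := Z.exists_walk_of_edist_ne_top hne
    have hplen : p.length ≤ 2 * k := by
      have : (p.length : ℕ∞) < ((2 * k + 1 : ℕ) : ℕ∞) := hp ▸ h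
      have := (Nat.cast_lt (α := ℕ∞)).mp this
      omega
    set q := p.bypass with hq
    have hqpath : q.IsPath := p.bypass_isPath
    have hqlen : q.length ≤ 2 * k := le_trans p.length_bypass_le hplen
    set q' := q.mapLe hZ with hq'
    have hq'path : q'.IsPath := hqpath.mapLe hZ
    have hnotmem : s(w, v) ∉ q'.edges := by
      intro hmem
      have : s(w, v) ∈ q.edges := by
        simpa [hq', SimpleGraph.Walk.mapLe, SimpleGraph.Walk.edges_map] using hmem
      exact hZn ((q.adj_of_mem_edges this).symm)
    have hcyc : (SimpleGraph.Walk.cons hvw.symm q').IsCycle :=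
      (SimpleGraph.Walk.cons_isCycle_iff q' hvw.symm).mpr ⟨hq'path, hnotmem⟩
    have := SimpleGraph.le_egirth.mp hg w _ hcyc
    have hlen : (SimpleGraph.Walk.cons hvw.symm q').length ≤ 2 * k + 1 := by
      simp only [SimpleGraph.Walk.length_cons]
      have : q'.length = q.length := by
        simp [hq', SimpleGraph.Walk.mapLe, SimpleGraph.Walk.length_map]
      omega
    have : ((2 * k + 2 : ℕ) : ℕ∞) ≤ ((2 * k + 1 : ℕ) : ℕ∞) :=
      le_trans this (by exact_mod_cast Nat.cast_le.mpr hlen)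
    have := (Nat.cast_le (α := ℕ∞)).mp this
    omega

/-- Approximate distance oracles determine subgraphs of high-girth graphs: if `G` has girth
at least `2k+2`, `Z ≤ G`, and `O` is a multiplicative `(2k-1)`-approximate distance oracle
for `Z`, then on each edge `{v,w}` of `G`, `O v w ≤ 2k-1` if the edge is in `Z` and
`O v w ≥ 2k+1` otherwise; hence `O` uniquely determines `Z` among subgraphs of `G`. -/
theorem distance_oracle_determines_subgraph {V : Type*} (G : SimpleGraph V) (k : ℕ)
    (hk : 1 ≤ k) (hg : (2 * k + 2 : ℕ) ≤ G.egirth)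
    (Z : SimpleGraph V) (hZ : Z ≤ G) (O : V → V → ℕ∞)
    (hO : ∀ v w, Z.edist v w ≤ O v w ∧ O v w ≤ ((2 * k - 1 : ℕ) : ℕ∞) * Z.edist v w) :
    (∀ v w, G.Adj v w →
      (Z.Adj v w → O v w ≤ ((2 * k - 1 : ℕ) : ℕ∞)) ∧
      (¬ Z.Adj v w → ((2 * k + 1 : ℕ) : ℕ∞) ≤ O v w)) ∧
    (∀ Z' : SimpleGraph V, Z' ≤ G →
      (∀ v w, Z'.edist v w ≤ O v w ∧ O v w ≤ ((2 * k - 1 : ℕ) : ℕ∞) * Z'.edist v w) →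
      Z' = Z) := by
  refine ⟨oracle_edge_bounds G k hk hg Z hZ O hO, ?_⟩
  intro Z' hZ' hO'
  have key : ∀ (A B : SimpleGraph V), A ≤ G → B ≤ G →
      (∀ v w, A.edist v w ≤ O v w ∧ O v w ≤ ((2 * k - 1 : ℕ) : ℕ∞) * A.edist v w) →
      (∀ v w, B.edist v w ≤ O v w ∧ O v w ≤ ((2 * k - 1 : ℕ) : ℕ∞) * B.edist v w) →
      ∀ v w, A.Adj v w → B.Adj v w := by
    intro A B hA hB hOA hOB v w hAvw
    by_contra hn
    have hGvw : G.Adj v w := hA hAvw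
    have h1 : ((2 * k + 1 : ℕ) : ℕ∞) ≤ O v w :=
      ((oracle_edge_bounds G k hk hg B hB O hOB v w hGvw).2) hn
    have h2 : O v w ≤ ((2 * k - 1 : ℕ) : ℕ∞) := by
      calc O v w ≤ ((2 * k - 1 : ℕ) : ℕ∞) * A.edist v w := (hOA v w).2
        _ = ((2 * k - 1 : ℕ) : ℕ∞) := by
            rw [SimpleGraph.edist_eq_one_iff_adj.mpr hAvw, mul_one]
    have := (Nat.cast_le (α := ℕ∞)).mp (le_trans h1 h2)
    omega
  ext v w
  exact ⟨key Z' Z hZ' hZ hO' hO v w, key Z Z' hZ hZ' hO hO' v w⟩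
end

section
/- The greedy spanner algorithm is correct: given a graph G, if H is a spanning subgraph of G constructed by iterating over the edges of G and adding an edge e to H whenever H ∪ {e} contains no cycle of length at most 2k, then H is a multiplicative (2k−1)-spanner of G. -/
open scoped Classical in
/-- One step of the greedy spanner algorithm: add the edge `e` to `H` if doing so
creates no cycle of length at most `2k`. -/
noncomputable def greedyStep {V : Type*} (k : ℕ) (H : SimpleGraph V) (e : Sym2 V) :
    SimpleGraph V :=
  if ∀ (v : V) (p : (H ⊔ SimpleGraph.fromEdgeSet {e}).Walk v v), p.IsCycle → 2 * k < p.length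
  then H ⊔ SimpleGraph.fromEdgeSet {e} else H

/-- The greedy spanner: iterate over a list of edges, adding an edge whenever it
does not close a cycle of length at most `2k`. -/
noncomputable def greedySpanner {V : Type*} (k : ℕ) (l : List (Sym2 V)) : SimpleGraph V :=
  l.foldl (greedyStep k) ⊥

/-!
The greedy algorithm keeps the girth of the graph built so far above `2k`. When the edge `xy` is
rejected, the short cycle it would close must pass through `xy`, because the current graph has no
short cycle; the rest of that cycle is an `x`–`y` walk of length at most `2k - 1` in the current
graph, and later steps only add edges. So every edge of `G` is stretched by at most `2k - 1`, and
summing along a shortest walk of `G` bounds every distance.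
-/

namespace SimpleGraph

variable {V : Type*} {G H : SimpleGraph V}

lemma lt_egirth_iff {n : ℕ} :
    (n : ℕ∞) < G.egirth ↔ ∀ a (w : G.Walk a a), w.IsCycle → n < w.length := by
  rw [← Order.add_one_le_iff_of_not_isMax (not_isMax_iff_ne_top.mpr (ENat.natCast_ne_top n)),
    le_egirth]
  norm_cast

lemma Walk.IsCycle.exists_walk_notMem_edges_length_lt {v x y : V} {c : G.Walk v v}
    (hc : c.IsCycle) (he : s(x, y) ∈ c.edges) :
    ∃ w : G.Walk x y, s(x, y) ∉ w.edges ∧ w.length < c.length := by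
  classical
  have hx := c.fst_mem_support_of_mem_edges he
  set c' := c.rotate x hx
  have he' : s(x, y) ∈ c'.edges := (c.rotate_edges x hx).mem_iff.mpr he
  have hy := c'.snd_mem_support_of_mem_edges he'
  set t := c'.takeUntil y hy
  set d := c'.dropUntil y hy
  have hsplit : t.append d = c' := c'.take_spec hy
  have hdisj : t.edges.Disjoint d.edges := by
    have : c'.edges.Nodup := (hc.rotate hx).edges_nodup
    rw [← hsplit, Walk.edges_append] at this
    exact List.disjoint_of_nodup_append this
  have hlen : t.length + d.length = c.length := by
    rw [← Walk.length_append, hsplit, Walk.length_rotate]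
  rw [← hsplit, Walk.edges_append, List.mem_append] at he'
  rcases he' with ht | hd
  · have : 0 < t.length := t.length_edges ▸ List.length_pos_of_mem ht
    exact ⟨d.reverse, by simpa using fun h ↦ hdisj ht h, by rw [Walk.length_reverse]; omega⟩
  · have : 0 < d.length := d.length_edges ▸ List.length_pos_of_mem hd
    exact ⟨t, fun h ↦ hdisj h hd, by omega⟩

lemma sup_fromEdgeSet_deleteEdges_le (e : Sym2 V) :
    (H ⊔ fromEdgeSet {e}).deleteEdges {e} ≤ H := by
  intro a b
  simp +contextual

lemma edist_lt_length_of_isCycle_sup_edge {x y v : V}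
    {c : (H ⊔ fromEdgeSet {s(x, y)}).Walk v v} (hc : c.IsCycle) (hlen : c.length < H.egirth) :
    H.edist x y < c.length := by
  by_cases he : s(x, y) ∈ c.edges
  · obtain ⟨w, hw, hwlen⟩ := hc.exists_walk_notMem_edges_length_lt he
    calc H.edist x y
        ≤ ((w.toDeleteEdge _ hw).mapLe (sup_fromEdgeSet_deleteEdges_le _)).length := edist_le _
      _ < c.length := by simpa using hwlen
  · have := ((hc.toDeleteEdges _ {s(x, y)} (by rintro _ h rfl; exact he h)).mapLe
      (sup_fromEdgeSet_deleteEdges_le _)).egirth_le_length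
    simp only [Walk.length_mapLe, Walk.length_transfer] at this
    exact absurd hlen this.not_gt

lemma edist_le_mul_length_of_forall_adj {c : ℕ∞} (h : ∀ a b, G.Adj a b → H.edist a b ≤ c)
    {u v : V} (p : G.Walk u v) : H.edist u v ≤ c * p.length := by
  induction p with
  | nil => simp
  | @cons a b _ hab q ih =>
    calc H.edist a _ ≤ H.edist a b + H.edist b _ := H.edist_triangle
      _ ≤ c + c * q.length := add_le_add (h a b hab) ih
      _ = c * (Walk.cons hab q).length := by push_cast [Walk.length_cons]; ring

lemma edist_le_mul_edist_of_forall_adj {c : ℕ∞} (hc : c ≠ 0)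
    (h : ∀ a b, G.Adj a b → H.edist a b ≤ c) (u v : V) : H.edist u v ≤ c * G.edist u v := by
  by_cases huv : G.Reachable u v
  · obtain ⟨p, hp⟩ := huv.exists_walk_length_eq_edist
    exact hp ▸ edist_le_mul_length_of_forall_adj h p
  · simp [edist_eq_top_of_not_reachable huv, ENat.mul_top hc]

end SimpleGraph

open SimpleGraph

section GreedySpanner

variable {V : Type*} {k : ℕ} {G H : SimpleGraph V}

lemma le_greedyStep (k : ℕ) (H : SimpleGraph V) (e : Sym2 V) : H ≤ greedyStep k H e := by
  unfold greedyStep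
  split_ifs
  exacts [le_sup_left, le_rfl]

lemma le_foldl_greedyStep (k : ℕ) (l : List (Sym2 V)) (H : SimpleGraph V) :
    H ≤ l.foldl (greedyStep k) H := by
  induction l generalizing H with
  | nil => exact le_rfl
  | cons e l ih => exact (le_greedyStep k H e).trans (ih _)

lemma greedyStep_le {e : Sym2 V} (hH : H ≤ G) (he : e ∈ G.edgeSet) : greedyStep k H e ≤ G := by
  unfold greedyStep
  split_ifs
  · refine sup_le hH fun a b hab ↦ ?_
    rw [fromEdgeSet_adj, Set.mem_singleton_iff] at hab
    rw [← hab.1] at he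
    exact he
  · exact hH

lemma foldl_greedyStep_le {l : List (Sym2 V)} (hH : H ≤ G) (hl : ∀ e ∈ l, e ∈ G.edgeSet) :
    l.foldl (greedyStep k) H ≤ G := by
  induction l generalizing H with
  | nil => exact hH
  | cons e l ih =>
    exact ih (greedyStep_le hH (hl e List.mem_cons_self)) fun f hf ↦ hl f (List.mem_cons_of_mem _ hf)

lemma lt_egirth_greedyStep (hH : ((2 * k : ℕ) : ℕ∞) < H.egirth) (e : Sym2 V) :
    ((2 * k : ℕ) : ℕ∞) < (greedyStep k H e).egirth := by
  unfold greedyStep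
  split_ifs with h
  exacts [lt_egirth_iff.mpr h, hH]

lemma edist_greedyStep_le (hk : 1 ≤ k) (hH : ((2 * k : ℕ) : ℕ∞) < H.egirth) {x y : V}
    (hxy : x ≠ y) : (greedyStep k H s(x, y)).edist x y ≤ ((2 * k - 1 : ℕ) : ℕ∞) := by
  unfold greedyStep
  split_ifs with h
  · have hadj : (H ⊔ fromEdgeSet {s(x, y)}).Adj x y := Or.inr ⟨rfl, hxy⟩
    rw [edist_eq_one_iff_adj.mpr hadj]
    exact_mod_cast (by omega : 1 ≤ 2 * k - 1)
  · push Not at h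
    obtain ⟨v, c, hc, hlen⟩ := h
    have hdist := edist_lt_length_of_isCycle_sup_edge hc (hH.trans_le' (by exact_mod_cast hlen))
    lift H.edist x y to ℕ using hdist.ne_top with d
    norm_cast at hdist ⊢
    omega

lemma edist_foldl_greedyStep_le (hk : 1 ≤ k) {l : List (Sym2 V)}
    (hH : ((2 * k : ℕ) : ℕ∞) < H.egirth) {x y : V} (hxy : x ≠ y) (hmem : s(x, y) ∈ l) :
    (l.foldl (greedyStep k) H).edist x y ≤ ((2 * k - 1 : ℕ) : ℕ∞) := by
  induction l generalizing H with
  | nil => simp at hmem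
  | cons e l ih =>
    rw [List.foldl_cons]
    obtain rfl | hmem := List.mem_cons.mp hmem
    · exact (edist_anti (le_foldl_greedyStep k l _)).trans (edist_greedyStep_le hk hH hxy)
    · exact ih (lt_egirth_greedyStep hH e) hmem

end GreedySpanner

/-- Correctness of the greedy spanner algorithm: running it over (a list enumerating)
the edges of `G` produces a subgraph of `G` that is a multiplicative `(2k-1)`-spanner. -/
theorem greedySpanner_is_spanner {V : Type*} (G : SimpleGraph V) (k : ℕ) (hk : 1 ≤ k)
    (l : List (Sym2 V)) (hl : ∀ e, e ∈ l ↔ e ∈ G.edgeSet) :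
    greedySpanner k l ≤ G ∧
    ∀ u v, (greedySpanner k l).edist u v ≤ ((2 * k - 1 : ℕ) : ℕ∞) * G.edist u v := by
  have hbot : ((2 * k : ℕ) : ℕ∞) < (⊥ : SimpleGraph V).egirth := by
    simpa using ENat.natCast_lt_top (2 * k)
  refine ⟨foldl_greedyStep_le bot_le fun e he ↦ (hl e).mp he, ?_⟩
  refine edist_le_mul_edist_of_forall_adj (by exact_mod_cast (by omega : 2 * k - 1 ≠ 0))
    fun a b hab ↦ ?_
  exact edist_foldl_greedyStep_le hk hbot hab.ne ((hl _).mpr hab)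
end

section
/- The greedy spanner algorithm output has girth greater than 2k, and hence at most O(n^{1+1/k}) edges. -/
section Aux

open SimpleGraph

variable {V : Type*} {H : SimpleGraph V} {k : ℕ}

/-- A path from a vertex to itself is nil. -/
lemma GreedyAux.path_loop_eq_nil {u : V} (p : H.Walk u u) (hp : p.IsPath) :
    p = SimpleGraph.Walk.nil := by
  cases p with
  | nil => rfl
  | cons h r =>
    rw [SimpleGraph.Walk.cons_isPath_iff] at hp
    exact absurd r.end_mem_support hp.2

/-- In a path, the only edge containing the initial vertex is the first edge. -/
lemma GreedyAux.first_edge_of_path {u s x : V} (t : H.Walk u s) (ht : t.IsPath)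
    (he : s(u, x) ∈ t.edges) :
    ∃ (h : H.Adj u x) (r : H.Walk x s), t = SimpleGraph.Walk.cons h r := by
  cases t with
  | nil => simp at he
  | cons h r =>
    rw [SimpleGraph.Walk.edges_cons, List.mem_cons] at he
    rcases he with he | he
    · rw [Sym2.congr_right] at he
      subst he
      exact ⟨h, r, rfl⟩
    · exfalso
      have := r.fst_mem_support_of_mem_edges he
      rw [SimpleGraph.Walk.cons_isPath_iff] at ht
      exact ht.2 this

lemma GreedyAux.snd_eq_of_cons_eq {u w a b : V} {h₁ : H.Adj u a} {h₂ : H.Adj u b}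
    {p : H.Walk a w} {q : H.Walk b w}
    (he : SimpleGraph.Walk.cons h₁ p = SimpleGraph.Walk.cons h₂ q) : a = b := by
  have h2 := congrArg SimpleGraph.Walk.support he
  rw [SimpleGraph.Walk.support_cons, SimpleGraph.Walk.support_cons,
    p.support_eq_cons, q.support_eq_cons] at h2
  simp only [List.cons.injEq] at h2
  exact h2.2.1

/-- Two distinct paths with the same endpoints yield a short cycle. -/
lemma GreedyAux.exists_cycle_of_two_paths : ∀ (n : ℕ) {u w : V} (p q : H.Walk u w),
    p.length ≤ n → p.IsPath → q.IsPath → p ≠ q →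
    ∃ (x : V) (c : H.Walk x x), c.IsCycle ∧ c.length ≤ p.length + q.length := by
  intro n
  induction n with
  | zero =>
    intro u w p q hlen hp hq hne
    have h0 : p.length = 0 := Nat.le_zero.mp hlen
    have huw : u = w := SimpleGraph.Walk.eq_of_length_eq_zero h0
    subst huw
    have : p = SimpleGraph.Walk.nil := GreedyAux.path_loop_eq_nil p hp
    subst this
    exact absurd (GreedyAux.path_loop_eq_nil q hq).symm hne
  | succ n ih =>
    intro u w p q hlen hp hq hne
    cases p with
    | nil =>
      exact absurd (GreedyAux.path_loop_eq_nil q hq).symm hne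
    | cons h₁ p' =>
      cases q with
      | nil =>
        exact absurd (GreedyAux.path_loop_eq_nil (SimpleGraph.Walk.cons h₁ p') hp) (by simp)
      | cons h₂ q' =>
        rename_i a b
        classical
        rw [SimpleGraph.Walk.cons_isPath_iff] at hp hq
        simp only [SimpleGraph.Walk.length_cons] at hlen ⊢
        by_cases hab : a = b
        · subst hab
          have hne' : p' ≠ q' := by
            rintro rfl
            exact hne rfl
          obtain ⟨x, c, hc, hcl⟩ := ih p' q' (by omega) hp.1 hq.1 hne'
          exact ⟨x, c, hc, by omega⟩
        · by_cases hmem : a ∈ q'.support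
          · -- construct a cycle directly: a → u → b → ... → a
            set t := q'.takeUntil a hmem with ht
            have htp : t.IsPath := hq.1.takeUntil hmem
            have hut : u ∉ t.support := fun hu => hq.2 (q'.support_takeUntil_subset hmem hu)
            have hpath : (SimpleGraph.Walk.cons h₂ t).IsPath := htp.cons hut
            have hedge : s(a, u) ∉ (SimpleGraph.Walk.cons h₂ t).edges := by
              rw [SimpleGraph.Walk.edges_cons, List.mem_cons]
              rintro (he | he)
              · rw [Sym2.eq_iff] at he
                rcases he with ⟨rfl, rfl⟩ | ⟨rfl, -⟩
                · exact h₁.ne rfl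
                · exact hab rfl
              · exact hut (SimpleGraph.Walk.snd_mem_support_of_mem_edges t he)
            refine ⟨a, SimpleGraph.Walk.cons h₁.symm (SimpleGraph.Walk.cons h₂ t),
              (SimpleGraph.Walk.cons_isCycle_iff _ _).mpr ⟨hpath, hedge⟩, ?_⟩
            simp only [SimpleGraph.Walk.length_cons]
            have h5 := q'.length_takeUntil_le hmem
            rw [← ht] at h5
            omega
          · -- recurse with p' and (cons h₁.symm (cons h₂ q'))
            have hau : a ≠ u := h₁.ne'
            have hP : (SimpleGraph.Walk.cons h₁.symm (SimpleGraph.Walk.cons h₂ q')).IsPath := by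
              rw [SimpleGraph.Walk.cons_isPath_iff]
              refine ⟨(SimpleGraph.Walk.cons_isPath_iff _ _).mpr ⟨hq.1, hq.2⟩, ?_⟩
              rw [SimpleGraph.Walk.support_cons, List.mem_cons]
              rintro (rfl | hmem')
              · exact hau rfl
              · exact hmem hmem'
            have hne' : p' ≠ SimpleGraph.Walk.cons h₁.symm (SimpleGraph.Walk.cons h₂ q') := by
              intro heq
              apply hp.2
              rw [heq]
              simp
            obtain ⟨x, c, hc, hcl⟩ := ih p' _ (by omega) hp.1 hP hne'
            refine ⟨x, c, hc, ?_⟩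
            simp only [SimpleGraph.Walk.length_cons] at hcl
            omega

/-- Uniqueness of short paths in a high-girth graph. -/
lemma GreedyAux.path_unique
    (Hg : ∀ (v : V) (c : H.Walk v v), c.IsCycle → 2 * k < c.length)
    {u w : V} (p q : H.Walk u w) (hp : p.IsPath) (hq : q.IsPath)
    (hpl : p.length ≤ k) (hql : q.length ≤ k) : p = q := by
  by_contra hne
  obtain ⟨x, c, hc, hcl⟩ := GreedyAux.exists_cycle_of_two_paths p.length p q le_rfl hp hq hne
  have := Hg x c hc
  omega

lemma GreedyAux.neighbor_on_path_eq_snd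
    (Hg : ∀ (v : V) (c : H.Walk v v), c.IsCycle → 2 * k < c.length)
    {u w : V} (p : H.Walk u w) (hp : p.IsPath) (hlen : p.length + 1 ≤ 2 * k)
    {x b : V} {h₀ : H.Adj u b} {q : H.Walk b w} (hpq : p = SimpleGraph.Walk.cons h₀ q)
    (hx : H.Adj u x) (hxs : x ∈ p.support) : x = b := by
  classical
  by_contra hxb
  set t := p.takeUntil x hxs with ht
  have htp : t.IsPath := hp.takeUntil hxs
  have hcyc : (SimpleGraph.Walk.cons hx.symm t).IsCycle := by
    rw [SimpleGraph.Walk.cons_isCycle_iff]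
    refine ⟨htp, fun he => ?_⟩
    rw [Sym2.eq_swap] at he
    obtain ⟨h', r, hr⟩ := GreedyAux.first_edge_of_path t htp he
    apply hxb
    have hspec := p.take_spec hxs
    rw [← ht, hr, SimpleGraph.Walk.cons_append] at hspec
    exact GreedyAux.snd_eq_of_cons_eq (hspec.trans hpq)
  have := Hg x _ hcyc
  have h5 := p.length_takeUntil_le hxs
  rw [← ht] at h5
  simp only [SimpleGraph.Walk.length_cons] at this
  omega

lemma GreedyAux.neighbor_inter_support_subsingleton
    (Hg : ∀ (v : V) (c : H.Walk v v), c.IsCycle → 2 * k < c.length)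
    {u w : V} (p : H.Walk u w) (hp : p.IsPath) (hlen : p.length + 1 ≤ 2 * k) :
    ∀ x y, H.Adj u x → H.Adj u y → x ∈ p.support → y ∈ p.support → x = y := by
  intro x y hx hy hxs hys
  cases p with
  | nil =>
    simp only [SimpleGraph.Walk.support_nil, List.mem_singleton] at hxs hys
    subst hxs; subst hys; rfl
  | cons h₀ q =>
    have e1 := GreedyAux.neighbor_on_path_eq_snd Hg _ hp hlen rfl hx hxs
    have e2 := GreedyAux.neighbor_on_path_eq_snd Hg _ hp hlen rfl hy hys
    rw [e1, e2]

end Aux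

section Counting

open SimpleGraph

variable {V : Type*} [Fintype V] [DecidableEq V] {k : ℕ}

lemma GreedyAux.adj_of_mem_nbr {H : SimpleGraph V} [DecidableRel H.Adj] {u x : V}
    (h : x ∈ H.neighborFinset u) : H.Adj x u :=
  ((SimpleGraph.mem_neighborFinset (G := H) u x).mp h).symm

/-- The finset of paths of length `i` ending at `v₀`, indexed by their starting vertex. -/
noncomputable def GreedyAux.pathFinset (H : SimpleGraph V) [DecidableRel H.Adj] (v₀ : V) :
    ℕ → Finset (Σ u : V, H.Walk u v₀)
  | 0 => {⟨v₀, SimpleGraph.Walk.nil⟩}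
  | (i+1) => (GreedyAux.pathFinset H v₀ i).biUnion (fun z =>
      ((H.neighborFinset z.1 \ z.2.support.toFinset).attach).image
        (fun x => ⟨x.1, SimpleGraph.Walk.cons
          (GreedyAux.adj_of_mem_nbr (Finset.mem_sdiff.mp x.2).1) z.2⟩))

variable {H : SimpleGraph V} [DecidableRel H.Adj] {v₀ : V}

lemma GreedyAux.pathFinset_spec (hv₀ : v₀ ∈ H.support) :
    ∀ i, ∀ z ∈ GreedyAux.pathFinset H v₀ i,
      (Sigma.snd z).IsPath ∧ (Sigma.snd z).length = i ∧ z.1 ∈ H.support := by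
  intro i
  induction i with
  | zero =>
    intro z hz
    simp only [GreedyAux.pathFinset, Finset.mem_singleton] at hz
    subst hz
    exact ⟨SimpleGraph.Walk.IsPath.nil, rfl, hv₀⟩
  | succ i ih =>
    intro z hz
    simp only [GreedyAux.pathFinset, Finset.mem_biUnion, Finset.mem_image] at hz
    obtain ⟨y, hy, x, hxy, rfl⟩ := hz
    obtain ⟨hy1, hy2, hy3⟩ := ih y hy
    have hx := Finset.mem_sdiff.mp x.2
    refine ⟨hy1.cons ?_, by simp [hy2], ?_⟩
    · intro hmem
      exact hx.2 (List.mem_toFinset.mpr hmem)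
    · exact ⟨y.1, GreedyAux.adj_of_mem_nbr hx.1⟩

lemma GreedyAux.pathFinset_card (hk : 1 ≤ k)
    (Hg : ∀ (v : V) (c : H.Walk v v), c.IsCycle → 2 * k < c.length)
    {d : ℕ} (hd : ∀ v ∈ H.support, d ≤ H.degree v) (hv₀ : v₀ ∈ H.support) :
    ∀ i, i ≤ k → (d - 1) ^ i ≤ (GreedyAux.pathFinset H v₀ i).card := by
  intro i
  induction i with
  | zero => intro _; simp [GreedyAux.pathFinset]
  | succ i ih =>
    intro hik
    have hik' : i ≤ k := by omega
    set f : (Σ u : V, H.Walk u v₀) → Finset (Σ u : V, H.Walk u v₀) := fun z =>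
      ((H.neighborFinset z.1 \ z.2.support.toFinset).attach).image
        (fun x => ⟨x.1, SimpleGraph.Walk.cons
          (GreedyAux.adj_of_mem_nbr (Finset.mem_sdiff.mp x.2).1) z.2⟩)
      with hf
    have hdisj : ∀ z₁ ∈ GreedyAux.pathFinset H v₀ i, ∀ z₂ ∈ GreedyAux.pathFinset H v₀ i,
        z₁ ≠ z₂ → Disjoint (f z₁) (f z₂) := by
      rintro ⟨u₁, p₁⟩ h₁ ⟨u₂, p₂⟩ h₂ hne
      rw [Finset.disjoint_left]
      rintro c hc₁ hc₂
      simp only [hf, Finset.mem_image] at hc₁ hc₂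
      obtain ⟨x, hx, rfl⟩ := hc₁
      obtain ⟨y, hy, hyc⟩ := hc₂
      apply hne
      obtain ⟨hfst, hsnd⟩ := Sigma.mk.inj_iff.mp hyc
      rcases x with ⟨xv, hxv⟩
      rcases y with ⟨yv, hyv⟩
      simp only at hfst hsnd
      subst hfst
      have hw := eq_of_heq hsnd
      have hu : u₂ = u₁ := GreedyAux.snd_eq_of_cons_eq hw
      subst hu
      have hp : p₂ = p₁ := by
        simpa using hw
      rw [hp]
    have hcard : (GreedyAux.pathFinset H v₀ (i+1)).card =
        ∑ z ∈ GreedyAux.pathFinset H v₀ i, (f z).card := by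
      rw [show GreedyAux.pathFinset H v₀ (i+1) = (GreedyAux.pathFinset H v₀ i).biUnion f
        from rfl]
      exact Finset.card_biUnion hdisj
    have hlow : ∀ z ∈ GreedyAux.pathFinset H v₀ i, d - 1 ≤ (f z).card := by
      rintro ⟨u, p⟩ hz
      obtain ⟨hp1, hp2, hp3⟩ := GreedyAux.pathFinset_spec hv₀ i ⟨u, p⟩ hz
      have hp2' : p.length = i := hp2
      have hdeg : d ≤ (H.neighborFinset u).card := hd u hp3
      have hinter : ((H.neighborFinset u) ∩ p.support.toFinset).card ≤ 1 := by
        rw [Finset.card_le_one]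
        intro x hx y hy
        rw [Finset.mem_inter, SimpleGraph.mem_neighborFinset, List.mem_toFinset] at hx hy
        exact GreedyAux.neighbor_inter_support_subsingleton Hg p hp1 (by omega)
          x y hx.1 hy.1 hx.2 hy.2
      have hsd : d - 1 ≤ ((H.neighborFinset u) \ p.support.toFinset).card := by
        have := Finset.card_sdiff_add_card_inter (H.neighborFinset u) p.support.toFinset
        omega
      calc d - 1 ≤ ((H.neighborFinset u) \ p.support.toFinset).card := hsd
        _ = ((H.neighborFinset u) \ p.support.toFinset).attach.card :=
            Finset.card_attach.symm
        _ = (f ⟨u, p⟩).card := by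
            rw [hf]
            refine (Finset.card_image_of_injective _ ?_).symm
            intro x y hxy
            exact Subtype.ext (congrArg Sigma.fst hxy)
    calc (d-1)^(i+1) = (d-1)^i * (d-1) := by ring
      _ ≤ (GreedyAux.pathFinset H v₀ i).card * (d-1) := Nat.mul_le_mul_right _ (ih hik')
      _ ≤ ∑ z ∈ GreedyAux.pathFinset H v₀ i, (f z).card := by
          rw [← smul_eq_mul]
          exact Finset.card_nsmul_le_sum _ _ _ hlow
      _ = (GreedyAux.pathFinset H v₀ (i+1)).card := hcard.symm

/-- The Moore-type bound: a graph with all cycles longer than `2k` and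
minimum degree `d` on its support satisfies `(d-1)^k ≤ |V|`. -/
lemma GreedyAux.moore_bound (hk : 1 ≤ k)
    (Hg : ∀ (v : V) (c : H.Walk v v), c.IsCycle → 2 * k < c.length)
    {d : ℕ} (hd : ∀ v ∈ H.support, d ≤ H.degree v) (hv₀ : v₀ ∈ H.support) :
    (d - 1) ^ k ≤ Fintype.card V := by
  have h1 := GreedyAux.pathFinset_card hk Hg hd hv₀ k le_rfl
  have h2 : (GreedyAux.pathFinset H v₀ k).card ≤ Fintype.card V := by
    have : (GreedyAux.pathFinset H v₀ k).card =
        ((GreedyAux.pathFinset H v₀ k).image Sigma.fst).card := by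
      refine (Finset.card_image_of_injOn ?_).symm
      rintro ⟨u₁, p₁⟩ h₁ ⟨u₂, p₂⟩ h₂ hfst
      obtain ⟨hp1, hl1, -⟩ := GreedyAux.pathFinset_spec hv₀ k _ h₁
      obtain ⟨hp2, hl2, -⟩ := GreedyAux.pathFinset_spec hv₀ k _ h₂
      simp only at hfst
      subst hfst
      have := GreedyAux.path_unique Hg p₁ p₂ hp1 hp2 (le_of_eq hl1) (le_of_eq hl2)
      rw [this]
    rw [this]
    exact Finset.card_le_univ _
  omega

end Counting

section Deletion

open SimpleGraph

variable {V : Type*} [Fintype V]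

lemma GreedyAux.ncard_incidenceSet (G : SimpleGraph V) (v : V) :
    (G.incidenceSet v).ncard = (G.neighborSet v).ncard := by
  classical
  rw [Set.ncard_eq_toFinset_card', Set.ncard_eq_toFinset_card', Set.toFinset_card,
    Set.toFinset_card, SimpleGraph.card_incidenceSet_eq_degree, ← G.card_neighborSet_eq_degree]

lemma GreedyAux.exists_min_degree_subgraph (d : ℕ) :
    ∀ (n : ℕ) (G : SimpleGraph V), G.edgeSet.ncard ≤ n →
    (d - 1) * G.support.ncard < G.edgeSet.ncard →
    ∃ H ≤ G, H.support.Nonempty ∧ ∀ v ∈ H.support, d ≤ (H.neighborSet v).ncard := by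
  intro n
  induction n with
  | zero =>
    intro G hn hlt
    omega
  | succ n ih =>
    intro G hn hlt
    by_cases hmin : ∀ v ∈ G.support, d ≤ (G.neighborSet v).ncard
    · refine ⟨G, le_rfl, ?_, hmin⟩
      have hne : G.edgeSet.Nonempty := by
        apply Set.nonempty_of_ncard_ne_zero
        omega
      obtain ⟨e, he⟩ := hne
      induction e with
      | h a b => exact ⟨a, b, he⟩
    · push_neg at hmin
      obtain ⟨v, hv, hdeg⟩ := hmin
      set G' := G.deleteEdges (G.incidenceSet v) with hG'
      have hsub : G'.edgeSet = G.edgeSet \ G.incidenceSet v :=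
        SimpleGraph.edgeSet_deleteEdges _
      have hcard : G'.edgeSet.ncard = G.edgeSet.ncard - (G.incidenceSet v).ncard := by
        rw [hsub]
        exact Set.ncard_diff (G.incidenceSet_subset v) (Set.toFinite _)
      have hdegv : (G.incidenceSet v).ncard = (G.neighborSet v).ncard :=
        GreedyAux.ncard_incidenceSet G v
      have hdeg1 : 1 ≤ (G.neighborSet v).ncard := by
        rw [SimpleGraph.mem_support] at hv
        obtain ⟨w, hw⟩ := hv
        have : w ∈ G.neighborSet v := hw
        have := Set.ncard_pos (Set.toFinite _) |>.mpr ⟨w, this⟩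
        omega
      have hvs : v ∉ G'.support := by
        rw [SimpleGraph.mem_support]
        rintro ⟨w, hw⟩
        rw [hG', SimpleGraph.deleteEdges_adj] at hw
        exact hw.2 ⟨hw.1, Sym2.mem_mk_left v w⟩
      have hsupp : G'.support ⊆ G.support := by
        intro x hx
        rw [SimpleGraph.mem_support] at hx ⊢
        obtain ⟨w, hw⟩ := hx
        rw [hG', SimpleGraph.deleteEdges_adj] at hw
        exact ⟨w, hw.1⟩
      have hsuppcard : G'.support.ncard + 1 ≤ G.support.ncard := by
        have h1 : G'.support ⊆ G.support \ {v} := fun x hx =>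
          ⟨hsupp hx, fun h => hvs (h ▸ hx)⟩
        have h2 : (G.support \ {v}).ncard = G.support.ncard - 1 :=
          Set.ncard_diff_singleton_of_mem hv
        have h3 : G'.support.ncard ≤ (G.support \ {v}).ncard :=
          Set.ncard_le_ncard h1 (Set.toFinite _)
        have h4 : 1 ≤ G.support.ncard :=
          Set.ncard_pos (Set.toFinite _) |>.mpr ⟨v, hv⟩
        omega
      have hlt' : (d - 1) * G'.support.ncard < G'.edgeSet.ncard := by
        have hd1 : (G.neighborSet v).ncard ≤ d - 1 := by omega
        have h6 : (d-1) * G.support.ncard ≥ (d-1) * (G'.support.ncard + 1) :=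
          Nat.mul_le_mul_left _ hsuppcard
        have h7 := hlt
        rw [hcard, hdegv]
        have hle : (G.neighborSet v).ncard ≤ G.edgeSet.ncard := by
          rw [← hdegv]
          exact Set.ncard_le_ncard (G.incidenceSet_subset v) (Set.toFinite _)
        have e1 : (d-1)*(G'.support.ncard+1) = (d-1)*G'.support.ncard + (d-1) := by ring
        omega
      obtain ⟨H, hH, hHne, hHd⟩ := ih G' (by omega) hlt'
      exact ⟨H, hH.trans (by rw [hG']; exact sdiff_le), hHne, hHd⟩

end Deletion

section Greedy

open SimpleGraph

variable {V : Type*} [Fintype V] {k : ℕ}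

lemma GreedyAux.greedySpanner_no_short_cycle (l : List (Sym2 V)) :
    ∀ (v : V) (c : (greedySpanner k l).Walk v v), c.IsCycle → 2 * k < c.length := by
  suffices h : ∀ (H₀ : SimpleGraph V),
      (∀ (v : V) (c : H₀.Walk v v), c.IsCycle → 2 * k < c.length) →
      ∀ (v : V) (c : (l.foldl (greedyStep k) H₀).Walk v v), c.IsCycle → 2 * k < c.length by
    apply h
    intro v c hc
    cases c with
    | nil => exact absurd rfl hc.ne_nil
    | cons h _ => exact absurd h (by simp)
  induction l with
  | nil => intro H₀ h; exact h
  | cons e l ih =>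
    intro H₀ h
    rw [List.foldl_cons]
    apply ih
    unfold greedyStep
    by_cases hcond : ∀ (v : V) (p : (H₀ ⊔ SimpleGraph.fromEdgeSet {e}).Walk v v),
        p.IsCycle → 2 * k < p.length
    · rw [if_pos hcond]; exact hcond
    · rw [if_neg hcond]; exact h

end Greedy

/-- The greedy spanner output has girth greater than `2k`, and hence at most
`n^{1+1/k} + n = O(n^{1+1/k})` edges. -/
theorem greedySpanner_girth_and_size {V : Type*} [Fintype V] (G : SimpleGraph V)
    (k : ℕ) (hk : 1 ≤ k) (l : List (Sym2 V)) (hl : ∀ e, e ∈ l ↔ e ∈ G.edgeSet) :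
    ((2 * k : ℕ) : ℕ∞) < (greedySpanner k l).egirth ∧
    ((greedySpanner k l).edgeSet.ncard : ℝ) ≤
      (Fintype.card V : ℝ) ^ ((1 : ℝ) + 1 / k) + (Fintype.card V : ℝ) := by
  classical
  have P := GreedyAux.greedySpanner_no_short_cycle (k := k) l
  constructor
  · have h1 : ((2 * k + 1 : ℕ) : ℕ∞) ≤ (greedySpanner k l).egirth := by
      rw [SimpleGraph.le_egirth]
      intro a w hw
      exact_mod_cast Nat.succ_le_of_lt (P a w hw)
    calc ((2 * k : ℕ) : ℕ∞) < ((2 * k + 1 : ℕ) : ℕ∞) := by exact_mod_cast Nat.lt_succ_self _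
      _ ≤ _ := h1
  · set n := Fintype.card V with hn
    set m := (greedySpanner k l).edgeSet.ncard with hm
    by_contra hcon
    push_neg at hcon
    set D : ℕ := ⌊(n : ℝ) ^ ((1 : ℝ) / k)⌋₊ + 1 with hD
    have hk0 : (k : ℝ) ≠ 0 := by positivity
    have hrpow_nonneg : (0:ℝ) ≤ (n : ℝ) ^ ((1 : ℝ) / k) := Real.rpow_nonneg (by positivity) _
    have hstep1 : D * n < m := by
      have hDle : (D : ℝ) ≤ (n : ℝ) ^ ((1 : ℝ) / k) + 1 := by
        push_cast [hD]
        have := Nat.floor_le hrpow_nonneg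
        linarith
      have hsplit : ((n : ℝ) ^ ((1 : ℝ) / k) + 1) * n = (n:ℝ) ^ ((1:ℝ) + 1/k) + n := by
        have h0 : (0:ℝ) ≤ (n:ℝ) := by positivity
        have : (n:ℝ) ^ ((1:ℝ) + 1/k) = (n:ℝ) ^ ((1:ℝ)/k) * (n:ℝ) := by
          rw [Real.rpow_add' h0 (by positivity), Real.rpow_one]
          ring
        rw [this]; ring
      have : (D : ℝ) * n < m := by
        calc (D:ℝ) * n ≤ ((n : ℝ) ^ ((1 : ℝ) / k) + 1) * n := by
              apply mul_le_mul_of_nonneg_right hDle (by positivity)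
          _ = (n:ℝ) ^ ((1:ℝ) + 1/k) + n := hsplit
          _ < m := hcon
      exact_mod_cast this
    have hsupp : (greedySpanner k l).support.ncard ≤ n := by
      have := Set.ncard_le_ncard (Set.subset_univ (greedySpanner k l).support)
        (Set.toFinite _)
      rwa [Set.ncard_univ, Nat.card_eq_fintype_card] at this
    obtain ⟨H, hHle, ⟨v₀, hv₀⟩, hHdeg⟩ :=
      GreedyAux.exists_min_degree_subgraph (D + 1) m (greedySpanner k l) le_rfl
        (by
          rw [Nat.add_sub_cancel]
          calc D * (greedySpanner k l).support.ncard ≤ D * n := Nat.mul_le_mul_left _ hsupp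
            _ < m := hstep1)
    have HgH : ∀ (v : V) (c : H.Walk v v), c.IsCycle → 2 * k < c.length := by
      intro v c hc
      have := P v (c.mapLe hHle) (hc.mapLe hHle)
      simpa using this
    have hdeg : ∀ v ∈ H.support, D + 1 ≤ H.degree v := by
      intro v hv
      have h1 := hHdeg v hv
      have h2 : (H.neighborSet v).ncard = H.degree v := by
        rw [← SimpleGraph.card_neighborSet_eq_degree, Set.ncard_eq_toFinset_card',
          Set.toFinset_card]
      omega
    have hmoore := GreedyAux.moore_bound hk HgH hdeg hv₀
    rw [Nat.add_sub_cancel] at hmoore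
    have hfloor : (n : ℝ) ^ ((1 : ℝ) / k) < D := by
      rw [hD]
      push_cast
      exact Nat.lt_floor_add_one _
    have hpow : (n : ℝ) < (D : ℝ) ^ k := by
      calc (n : ℝ) = ((n : ℝ) ^ ((1:ℝ)/k)) ^ (k : ℕ) := by
            rw [← Real.rpow_natCast ((n : ℝ) ^ ((1:ℝ)/k)) k, ← Real.rpow_mul (by positivity)]
            rw [one_div, inv_mul_cancel₀ hk0, Real.rpow_one]
        _ < (D : ℝ) ^ k := by
            apply pow_lt_pow_left₀ hfloor hrpow_nonneg (by omega)
    have : (D : ℝ) ^ k ≤ (n : ℝ) := by exact_mod_cast hmoore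
    linarith
end

section
/- Let G be a graph, P a shortest path between u and v in G, and H a subgraph of G containing a BFS tree (shortest path tree) of G rooted at a vertex w that is adjacent in G to some vertex x lying on P. Then d_H(u,v) ≤ d_G(u,v) + 2. -/
/-- If `H ≤ G` contains a BFS (shortest-path) tree of `G` rooted at `w`, i.e. `H`
preserves all distances from `w`, and `w` is adjacent in `G` to a vertex `x` lying on
a shortest `u`–`v` path, then `d_H(u,v) ≤ d_G(u,v) + 2`. -/
theorem bfs_tree_stitch {V : Type*} (G H : SimpleGraph V) (hH : H ≤ G)
    (w : V) (hbfs : ∀ z, H.edist w z = G.edist w z)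
    (u v x : V) (hx : G.edist u x + G.edist x v = G.edist u v)
    (hadj : G.Adj x w) :
    H.edist u v ≤ G.edist u v + 2 := by
  have hxw : G.edist x w ≤ 1 := by
    simpa using G.edist_le (hadj.toWalk)
  calc H.edist u v ≤ H.edist u w + H.edist w v := H.edist_triangle
    _ = G.edist w u + G.edist w v := by
        rw [SimpleGraph.edist_comm (u := u) (v := w), hbfs u, hbfs v, SimpleGraph.edist_comm (u := w) (v := u) (G := G)]
    _ ≤ (G.edist w x + G.edist x u) + (G.edist w x + G.edist x v) := by
        gcongr <;> exact G.edist_triangle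
    _ ≤ (1 + G.edist u x) + (1 + G.edist x v) := by
        rw [SimpleGraph.edist_comm (G := G) (u := x) (v := u)]
        gcongr <;> rwa [SimpleGraph.edist_comm (G := G) (u := w) (v := x)]
    _ = (G.edist u x + G.edist x v) + 2 := by ring
    _ = G.edist u v + 2 := by rw [hx]
end

section
/- Let P be a simple path in a graph G in which every internal vertex incident to a 'missing' edge has degree greater than d. If the missing edges of P number at least k, then the union of the closed neighborhoods of the endpoints of the missing edges has size at least k·d/2. -/
/-! Each edge of `D` is traversed by `p` towards one of its endpoints, and a path enters every
vertex at most once, so at least `k` vertices of `p` are endpoints of edges of `D`; each has more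
than `d` neighbours. Along a shortest path the distance from `u` is injective, so the path vertices
adjacent to a fixed `w` (pairwise at distance at most 2) are at most three. Double counting the
adjacencies between these endpoints and the union `N` of their neighbourhoods gives
`k (d + 1) ≤ 3 |N|`.
-/

open Finset SimpleGraph

theorem Finset.card_le_add_one_of_forall_le_add {s : Finset ℕ} {r : ℕ}
    (h : ∀ a ∈ s, ∀ b ∈ s, a ≤ b + r) : #s ≤ r + 1 := by
  rcases s.eq_empty_or_nonempty with rfl | hs
  · simp
  have hsub : s ⊆ Icc (s.min' hs) (s.min' hs + r) := fun a ha =>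
    mem_Icc.2 ⟨s.min'_le a ha, h a ha _ (s.min'_mem hs)⟩
  exact (card_le_card hsub).trans_eq (by rw [Nat.card_Icc]; omega)

namespace SimpleGraph.Walk

variable {V : Type*} {G : SimpleGraph V} {u v : V}

theorem IsPath.card_le_card_of_subset_edges {p : G.Walk u v} (hp : p.IsPath)
    {D : Finset (Sym2 V)} (hD : ∀ e ∈ D, e ∈ p.edges) {X : Finset V}
    (hX : ∀ e ∈ D, ∀ x ∈ e, x ∈ X) : #D ≤ #X := by
  classical
  set T := {d ∈ p.darts.toFinset | d.edge ∈ D}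
  have hDT : D ⊆ T.image Dart.edge := fun e he => by
    obtain ⟨d, hd, rfl⟩ := List.mem_map.1 (hD e he)
    exact mem_image_of_mem _ (mem_filter.2 ⟨List.mem_toFinset.2 hd, he⟩)
  have hsnd : (p.darts.map (·.snd)).Nodup := by
    rw [map_snd_darts]; exact hp.support_nodup.sublist p.support.tail_sublist
  have hinj : Set.InjOn (fun d : G.Dart => d.snd) T := fun d hd d' hd' =>
    List.inj_on_of_nodup_map hsnd (List.mem_toFinset.1 (mem_filter.1 hd).1)
      (List.mem_toFinset.1 (mem_filter.1 hd').1)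
  calc #D ≤ #T := (card_le_card hDT).trans card_image_le
    _ ≤ #X := card_le_card_of_injOn _
      (fun d hd => hX _ (mem_filter.1 hd).2 _ (Sym2.mem_mk_right _ _)) hinj

theorem getVert_dist_of_length_eq_dist {p : G.Walk u v} (hp : p.length = G.dist u v)
    {x : V} (hx : x ∈ p.support) : p.getVert (G.dist u x) = x := by
  classical
  rw [← length_eq_dist_of_subwalk hp (p.isSubwalk_takeUntil hx), getVert_length_takeUntil]

theorem card_le_of_length_eq_dist {p : G.Walk u v}
    (hp : p.length = G.dist u v) {T : Finset V} (hT : ∀ x ∈ T, x ∈ p.support) {r : ℕ}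
    (hr : ∀ x ∈ T, ∀ y ∈ T, G.dist x y ≤ r) : #T ≤ r + 1 := by
  classical
  have hinj : Set.InjOn (G.dist u) T := fun x hx y hy h => by
    rw [← getVert_dist_of_length_eq_dist hp (hT x hx), h,
      getVert_dist_of_length_eq_dist hp (hT y hy)]
  rw [← card_image_of_injOn hinj]
  refine card_le_add_one_of_forall_le_add ?_
  simp only [mem_image]
  rintro _ ⟨x, hx, rfl⟩ _ ⟨y, hy, rfl⟩
  have hreach : G.Reachable u y := ⟨p.takeUntil y (hT y hy)⟩
  exact (hreach.dist_triangle_left x).trans (by grw [hr y hy x hx])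

theorem card_filter_adj_le_three_of_length_eq_dist [DecidableRel G.Adj]
    {p : G.Walk u v} (hp : p.length = G.dist u v) {T : Finset V}
    (hT : ∀ x ∈ T, x ∈ p.support) (w : V) : #{x ∈ T | G.Adj x w} ≤ 3 := by
  refine card_le_of_length_eq_dist hp (fun x hx => hT x (mem_filter.1 hx).1) fun x hx y hy => ?_
  have hxw := (mem_filter.1 hx).2
  have hyw := (mem_filter.1 hy).2
  simpa using G.dist_le (cons hxw (cons hyw.symm nil))

end SimpleGraph.Walk

/-- Let `p` be a shortest `u`–`v` path in `G` and `D` a set of at least `k` edges of `p`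
all of whose endpoints have degree greater than `d` in `G`. Then the union of the closed
neighborhoods of the endpoints of the edges of `D` has at least `k·d/3` vertices. -/
theorem missing_edges_neighborhood_bound {V : Type*} [Fintype V] [DecidableEq V]
    (G : SimpleGraph V) [DecidableRel G.Adj]
    (u v : V) (p : G.Walk u v) (hp : p.IsPath) (hshort : p.length = G.dist u v)
    (D : Finset (Sym2 V)) (hD : ∀ e ∈ D, e ∈ p.edges)
    (k d : ℕ) (hk : k ≤ D.card)
    (hdeg : ∀ e ∈ D, ∀ x ∈ e, d < G.degree x) :
    k * d ≤ 3 * ({w : V | ∃ e ∈ D, ∃ x ∈ e, x = w ∨ G.Adj x w}.ncard) := by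
  set X : Finset V := {x | ∃ e ∈ D, x ∈ e}
  set N : Finset V := {w | ∃ e ∈ D, ∃ x ∈ e, x = w ∨ G.Adj x w}
  have hN : {w : V | ∃ e ∈ D, ∃ x ∈ e, x = w ∨ G.Adj x w}.ncard = #N := by
    rw [← Set.ncard_coe_finset]; simp [N]
  have hDX : #D ≤ #X :=
    hp.card_le_card_of_subset_edges hD fun e he x hx => by simpa [X] using ⟨e, he, hx⟩
  have hXp : ∀ x ∈ X, x ∈ p.support := fun x hx => by
    obtain ⟨e, he, hx⟩ := (mem_filter.1 hx).2
    exact Walk.mem_support_of_mem_edges (hD e he) hx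
  have hXN : ∀ x ∈ X, d + 1 ≤ #(N.bipartiteAbove G.Adj x) := fun x hx => by
    obtain ⟨e, he, hx⟩ := (mem_filter.1 hx).2
    have hsub : G.neighborFinset x ⊆ N.bipartiteAbove G.Adj x := fun w hw => by
      rw [mem_neighborFinset] at hw
      simpa [N, mem_bipartiteAbove, hw] using ⟨e, he, x, hx, Or.inr hw⟩
    exact (G.card_neighborFinset_eq_degree x ▸ hdeg e he x hx).trans_le (card_le_card hsub)
  have hcount : #X * (d + 1) ≤ #N * 3 := card_mul_le_card_mul G.Adj hXN
    fun w _ => Walk.card_filter_adj_le_three_of_length_eq_dist hshort hXp w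
  calc k * d ≤ #X * (d + 1) := Nat.mul_le_mul (hk.trans hDX) d.le_succ
    _ ≤ #N * 3 := hcount
    _ = 3 * _ := by rw [hN, mul_comm]
end
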